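/- Let ⟨𝒮, ℱ⟩ be an instance of OGTP and let ⟨𝒬, Q₀⟩ be the instance of the Query Determinacy Problem for Regular Path Queries produced by the reduction. Then the following are equivalent: (i) ⟨𝒮, ℱ⟩ has no solution; (ii) 𝒬 determines Q₀. -/

import Mathlib

/-- A graph database (structure) over vertex type `V` and edge-label alphabet `γ`:
`D x c y` means that there is an edge from `x` to `y` labeled with `c`. -/
def DB (V γ : Type) : Type := V → γ → V → Prop

/-- `pathSat D x w y` : the structure `D` satisfies `w(x,y)`, i.e. there is a directed
path from `x` to `y` whose consecutive edge labels spell the word `w`. -/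
def pathSat {V γ : Type} (D : DB V γ) : V → List γ → V → Prop
  | x, [], y => x = y
  | x, c :: w, y => ∃ z, D x c z ∧ pathSat D z w y

/-- `D ⊨ L(x,y)` for a language `L` : some word of `L` labels a path from `x` to `y`. -/
def langSat {V γ : Type} (D : DB V γ) (L : Language γ) (x y : V) : Prop :=
  ∃ w ∈ L, pathSat D x w y

/-- The answer `L(D)` of the path query given by the language `L` on the database `D`. -/
def qry {V γ : Type} (L : Language γ) (D : DB V γ) : Set (V × V) :=
  { p | langSat D L p.1 p.2 }

/-- All edge labels of `D` lie in the set `A`. -/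
def labelsIn {V γ : Type} (D : DB V γ) (A : Set γ) : Prop :=
  ∀ x c y, D x c y → c ∈ A

/-- A language is regular iff it is the language of some regular expression. -/
def IsRegularLang {γ : Type} (L : Language γ) : Prop :=
  ∃ r : RegularExpression γ, r.matches' = L

/-- `Qs` determines `Q0` : any two structures (over a common domain) on which all the
queries of `Qs` agree also agree on `Q0`. -/
def Determines {γ : Type} (Qs : Set (Language γ)) (Q0 : Language γ) : Prop :=
  ∀ (V : Type) (D₁ D₂ : DB V γ),
    (∀ L ∈ Qs, qry L D₁ = qry L D₂) → qry Q0 D₁ = qry Q0 D₂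

/-- `Qs` determines `Q0` over structures whose labels come from the alphabet `A`. -/
def DeterminesOn {γ : Type} (A : Set γ) (Qs : Set (Language γ)) (Q0 : Language γ) : Prop :=
  ∀ (V : Type) (D₁ D₂ : DB V γ), labelsIn D₁ A → labelsIn D₂ A →
    (∀ L ∈ Qs, qry L D₁ = qry L D₂) → qry Q0 D₁ = qry Q0 D₂

/-- Finite determinacy : the same notion with `D₁`, `D₂` ranging over finite structures. -/
def FinDeterminesOn {γ : Type} (A : Set γ) (Qs : Set (Language γ)) (Q0 : Language γ) : Prop :=
  ∀ (V : Type), Finite V → ∀ (D₁ D₂ : DB V γ), labelsIn D₁ A → labelsIn D₂ A →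
    (∀ L ∈ Qs, qry L D₁ = qry L D₂) → qry Q0 D₁ = qry Q0 D₂

/-! ### Our Grid Tiling Problem.
Shades are natural numbers, `black := 0`.  Directions are booleans:
`false` = Horizontal `H`, `true` = Vertical `V`. -/

/-- A solution of the OGTP instance `⟨S, F⟩` : a square grid of some size `m ≥ 1` (with
vertices `(i,j)`, `0 ≤ i,j ≤ m`, horizontal edges `(i,j) → (i+1,j)` and vertical edges
`(i,j) → (i,j+1)`), whose horizontal (resp. vertical) edges are labeled, via `hl` (resp.
`vl`), with shades from `S`, whose bottom-left vertical edge and upper-right horizontal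
edge are black, and which contains no directed path of length 2 whose pair of labels is
a forbidden pair from `F`. -/
def GridSol (S : Finset ℕ) (F : Finset ((Bool × ℕ) × (Bool × ℕ))) : Prop :=
  ∃ m : ℕ, 1 ≤ m ∧ ∃ hl vl : ℕ → ℕ → ℕ,
    (∀ i j, i < m → j ≤ m → hl i j ∈ S) ∧
    (∀ i j, i ≤ m → j < m → vl i j ∈ S) ∧
    vl 0 0 = 0 ∧
    hl (m - 1) m = 0 ∧
    (∀ i j, i + 1 < m → j ≤ m → ((false, hl i j), (false, hl (i + 1) j)) ∉ F) ∧
    (∀ i j, i < m → j < m → ((false, hl i j), (true, vl (i + 1) j)) ∉ F) ∧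
    (∀ i j, i < m → j < m → ((true, vl i j), (false, hl i (j + 1))) ∉ F) ∧
    (∀ i j, i ≤ m → j + 1 < m → ((true, vl i j), (true, vl i (j + 1))) ∉ F)

/-- Well-formedness of the set of forbidden pairs : all its shades belong to `S`. -/
def FWf (S : Finset ℕ) (F : Finset ((Bool × ℕ) × (Bool × ℕ))) : Prop :=
  ∀ p ∈ F, p.1.2 ∈ S ∧ p.2.2 ∈ S

/-! ### The alphabet of the reduction.
`Σ = {α, β, ω} ∪ Σ₀` with `Σ₀ = {A,B} × {H,V} × {W,C} × 𝒮`.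
Conventions: in `Sig.base ab dir temp shade`,
`ab = true` means `A` and `ab = false` means `B`;
`dir = false` means `H` (horizontal) and `dir = true` means `V` (vertical);
`temp = true` means `W` (warm) and `temp = false` means `C` (cold);
shades are natural numbers, `black := 0`. -/
inductive Sig : Type where
  | alpha : Sig
  | beta : Sig
  | omega : Sig
  | base : Bool → Bool → Bool → ℕ → Sig
deriving DecidableEq

/-- `c` is a letter of `Σ₀` (its shade belonging to `S`). -/
def inSigma0 (S : Finset ℕ) : Sig → Prop
  | .base _ _ _ s => s ∈ S
  | _ => False

/-- `c` is a letter of `Σ₀` with the indicated first three components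
(its shade ranging over `S`). -/
def isL (S : Finset ℕ) (ab dir temp : Bool) (c : Sig) : Prop :=
  ∃ s ∈ S, c = Sig.base ab dir temp s

/-- All letters of the word `u` belong to `Σ₀`. -/
def allS0 (S : Finset ℕ) (u : List Sig) : Prop := ∀ c ∈ u, inSigma0 S c

/-- `Q¹ = ω`. -/
def Qg1 : Language Sig := {[Sig.omega]}

/-- `Q² = α + β`. -/
def Qg2 : Language Sig := {[Sig.alpha], [Sig.beta]}

/-- `[B H W][A V W]`, the first summand of `Q³`. -/
def Qg3a (S : Finset ℕ) : Language Sig :=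
  { w | ∃ c1 c2, w = [c1, c2] ∧ isL S false false true c1 ∧ isL S true true true c2 }

/-- `[B V C][A H C]`, the second summand of `Q³`. -/
def Qg3b (S : Finset ℕ) : Language Sig :=
  { w | ∃ c1 c2, w = [c1, c2] ∧ isL S false true false c1 ∧ isL S true false false c2 }

/-- `[A H C][B V C]`, the first summand of `Q⁴`. -/
def Qg4a (S : Finset ℕ) : Language Sig :=
  { w | ∃ c1 c2, w = [c1, c2] ∧ isL S true false false c1 ∧ isL S false true false c2 }

/-- `[A V W][B H W]`, the second summand of `Q⁴`. -/
def Qg4b (S : Finset ℕ) : Language Sig :=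
  { w | ∃ c1 c2, w = [c1, c2] ∧ isL S true true true c1 ∧ isL S false false true c2 }

/-- `[B V C]`, the first summand of `Q⁵`. -/
def Qg5a (S : Finset ℕ) : Language Sig := { w | ∃ c, w = [c] ∧ isL S false true false c }

/-- `[B V W]`, the second summand of `Q⁵`. -/
def Qg5b (S : Finset ℕ) : Language Sig := { w | ∃ c, w = [c] ∧ isL S false true true c }

/-- `[B H W]`, the first summand of `Q⁶`. -/
def Qg6a (S : Finset ℕ) : Language Sig := { w | ∃ c, w = [c] ∧ isL S false false true c }

/-- `[B H C]`, the second summand of `Q⁶`. -/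
def Qg6b (S : Finset ℕ) : Language Sig := { w | ∃ c, w = [c] ∧ isL S false false false c }

/-- `[A V W]`, the first summand of `Q⁷`. -/
def Qg7a (S : Finset ℕ) : Language Sig := { w | ∃ c, w = [c] ∧ isL S true true true c }

/-- `[A V C]`, the second summand of `Q⁷`. -/
def Qg7b (S : Finset ℕ) : Language Sig := { w | ∃ c, w = [c] ∧ isL S true true false c }

/-- `[A H C]`, the first summand of `Q⁸`. -/
def Qg8a (S : Finset ℕ) : Language Sig := { w | ∃ c, w = [c] ∧ isL S true false false c }

/-- `[A H W]`, the second summand of `Q⁸`. -/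
def Qg8b (S : Finset ℕ) : Language Sig := { w | ∃ c, w = [c] ∧ isL S true false true c }

/-- `𝒬_good`, the set of 8 good languages. -/
def Qgood (S : Finset ℕ) : Set (Language Sig) :=
  {Qg1, Qg2, Qg3a S + Qg3b S, Qg4a S + Qg4b S, Qg5a S + Qg5b S,
   Qg6a S + Qg6b S, Qg7a S + Qg7b S, Qg8a S + Qg8b S}

/-- `β (Σ_{s ∈ 𝒮∖{black}} [A V W s]) Σ₀* ω`. -/
def Qbad1 (S : Finset ℕ) : Language Sig :=
  { w | ∃ s u, s ∈ S ∧ s ≠ 0 ∧ allS0 S u ∧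
      w = Sig.beta :: Sig.base true true true s :: (u ++ [Sig.omega]) }

/-- `β Σ₀* (Σ_{s ∈ 𝒮∖{black}} [B H W s]) ω`. -/
def Qbad2 (S : Finset ℕ) : Language Sig :=
  { w | ∃ s u, s ∈ S ∧ s ≠ 0 ∧ allS0 S u ∧
      w = Sig.beta :: (u ++ [Sig.base false false true s, Sig.omega]) }

/-- `β Σ₀* [• d W s][• d' W s'] Σ₀* ω`, for a forbidden pair `⟨(d,s),(d',s')⟩`. -/
def QbadF (S : Finset ℕ) (d : Bool) (s : ℕ) (d' : Bool) (s' : ℕ) : Language Sig :=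
  { w | ∃ u u', ∃ b b' : Bool, allS0 S u ∧ allS0 S u' ∧
      w = Sig.beta :: (u ++ Sig.base b d true s :: Sig.base b' d' true s' :: (u' ++ [Sig.omega])) }

/-- `𝒬_bad`. -/
def Qbad (S : Finset ℕ) (F : Finset ((Bool × ℕ) × (Bool × ℕ))) : Set (Language Sig) :=
  {Qbad1 S, Qbad2 S} ∪ { L | ∃ p ∈ F, L = QbadF S p.1.1 p.1.2 p.2.1 p.2.2 }

/-- `α Σ₀* [• • W] Σ₀* ω`. -/
def Qugly1 (S : Finset ℕ) : Language Sig :=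
  { w | ∃ u c u', allS0 S u ∧ allS0 S u' ∧ inSigma0 S c ∧
      (∃ ab d s, c = Sig.base ab d true s) ∧
      w = Sig.alpha :: (u ++ c :: (u' ++ [Sig.omega])) }

/-- `β Σ₀* [• • C] Σ₀* ω`. -/
def Qugly2 (S : Finset ℕ) : Language Sig :=
  { w | ∃ u c u', allS0 S u ∧ allS0 S u' ∧ inSigma0 S c ∧
      (∃ ab d s, c = Sig.base ab d false s) ∧
      w = Sig.beta :: (u ++ c :: (u' ++ [Sig.omega])) }

/-- `𝒬_ugly`. -/
def Qugly (S : Finset ℕ) : Set (Language Sig) := {Qugly1 S, Qugly2 S}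

/-- `𝒬 = 𝒬_good ∪ 𝒬_bad ∪ 𝒬_ugly`. -/
def QQ (S : Finset ℕ) (F : Finset ((Bool × ℕ) × (Bool × ℕ))) : Set (Language Sig) :=
  Qgood S ∪ Qbad S F ∪ Qugly S

/-- `[A H C][B V C]`, the repeated block of `Q_start`. -/
def startBlock (S : Finset ℕ) : Language Sig :=
  { w | ∃ c1 c2, w = [c1, c2] ∧ isL S true false false c1 ∧ isL S false true false c2 }

/-- `Q_start = α ([A H C][B V C])⁺ ω`. -/
def Qstart (S : Finset ℕ) : Language Sig :=
  { w | ∃ u, u ∈ KStar.kstar (startBlock S) ∧ u ≠ [] ∧ w = Sig.alpha :: (u ++ [Sig.omega]) }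

/-- The sum of the languages `QbadF` over all forbidden pairs of `F`. -/
def QbadFSum (S : Finset ℕ) (F : Finset ((Bool × ℕ) × (Bool × ℕ))) : Language Sig :=
  { w | ∃ p ∈ F, w ∈ QbadF S p.1.1 p.1.2 p.2.1 p.2.2 }

/-- `Q₀ = Q_start + Σ_{L ∈ 𝒬_bad ∪ 𝒬_ugly} L`. -/
def Q0L (S : Finset ℕ) (F : Finset ((Bool × ℕ) × (Bool × ℕ))) : Language Sig :=
  Qstart S + Qbad1 S + Qbad2 S + QbadFSum S F + Qugly1 S + Qugly2 S

/-- The alphabet `Σ = {α, β, ω} ∪ Σ₀` of the reduction, as a set of letters. -/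
def SigAlph (S : Finset ℕ) : Set Sig :=
  {Sig.alpha, Sig.beta, Sig.omega} ∪ { c | inSigma0 S c }

/-!
If the tiling instance has a solution, the warm structure (`β`, the solution grid written with
warm letters, `ω`) and the cold structure (`α`, an all-black cold grid, `ω`) agree on every query
of `𝒬`, while only the cold one has a `Q_start` path: `𝒬` does not determine `Q₀`.

Conversely, let `D₁`, `D₂` agree on `𝒬`, and let `D₁` have a `Q_start` path from `x` to `y` while
`(x, y) ∉ Q₀(D₂)` (the rest of `Q₀` consists of queries of `𝒬`). The queries `Q¹`, `Q²` and the
one-letter queries `Q⁵ … Q⁸` copy the staircase `α ([A H C][B V C])ᵐ ω` to `D₂` up to temperatures.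
As the ugly queries do not fire, every letter on a route from the start of the staircase to its
end is cold in `D₁`, and warm in `D₂` (were `D₂` entered by `α`, the copy would be a `Q_start`
path). The corner queries `Q³`, `Q⁴` then allow one to replace a two-step path around a unit square
by the path around the other side, in both structures at once; starting from the staircase this
fills in the whole grid, band by band on either side of the diagonal. The warm edges of that grid
in `D₂` form a solution, since a non-black corner edge or a forbidden pair would give a word of
`𝒬_bad ⊆ Q₀`.
-/

open Relation

section Paths

variable {V γ : Type} {D : DB V γ}

theorem pathSat_append (w₁ : List γ) {w₂ : List γ} {x y : V} :
    pathSat D x (w₁ ++ w₂) y ↔ ∃ z, pathSat D x w₁ z ∧ pathSat D z w₂ y := by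
  induction w₁ generalizing x with
  | nil => simp [pathSat]
  | cons c w ih => simp only [List.cons_append, pathSat, ih]; grind

@[simp]
theorem pathSat_singleton {c : γ} {x y : V} : pathSat D x [c] y ↔ D x c y := by
  simp [pathSat]

theorem pathSat_pair {c₁ c₂ : γ} {x y : V} :
    pathSat D x [c₁, c₂] y ↔ ∃ z, D x c₁ z ∧ D z c₂ y := by
  simp [pathSat]

theorem pathSat.exists_edge {x y : V} {w : List γ} (h : pathSat D x w y) {c : γ} (hc : c ∈ w) :
    ∃ a b, D a c b := by
  induction w generalizing x with
  | nil => simp at hc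
  | cons c' w ih =>
    obtain ⟨z, e, h⟩ := h
    rcases List.mem_cons.1 hc with rfl | hc
    exacts [⟨x, z, e⟩, ih h hc]

theorem qry_eq_empty_of_forall_mem {L : Language γ}
    (h : ∀ w ∈ L, ∃ c ∈ w, ∀ a b, ¬ D a c b) : qry L D = ∅ :=
  Set.eq_empty_of_forall_notMem fun _ ⟨w, hw, hp⟩ =>
    have ⟨_, hc, hno⟩ := h w hw
    have ⟨a, b, e⟩ := hp.exists_edge hc
    hno a b e

theorem qry_mono {L M : Language γ} (h : L ≤ M) : qry L D ⊆ qry M D :=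
  fun _ ⟨w, hw, hp⟩ => ⟨w, h hw, hp⟩

end Paths

theorem reflTransGen_of_seq {α : Type} {r : α → α → Prop} (f : ℕ → α) {a b : ℕ} (hab : a ≤ b)
    (h : ∀ i, a ≤ i → i < b → ReflTransGen r (f i) (f (i + 1))) : ReflTransGen r (f a) (f b) :=
  ReflTransGen.lift' f (fun _ _ h => h) _ _ <|
    reflTransGen_of_succ_of_le (fun i j => ReflTransGen r (f i) (f j)) (fun i hi => h i hi.1 hi.2)
      hab

theorem Relation.TransGen.exists_seq {α : Type} {r : α → α → Prop} {a b : α} (h : TransGen r a b) :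
    ∃ n, 1 ≤ n ∧ ∃ f : ℕ → α, f 0 = a ∧ f n = b ∧ ∀ i < n, r (f i) (f (i + 1)) := by
  induction h with
  | @single c h => exact ⟨1, le_rfl, fun i => if i = 0 then a else c, rfl, rfl, by simpa using h⟩
  | @tail _ c _ hcd ih =>
    obtain ⟨n, hn, f, hf0, hfn, hf⟩ := ih
    refine ⟨n + 1, by omega, fun i => if i ≤ n then f i else c, by simpa using hf0, by simp, ?_⟩
    intro i hi
    rcases Nat.lt_or_ge i n with hin | hin
    · simpa [hin.le, Nat.succ_le_of_lt hin] using hf i hin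
    · obtain rfl : i = n := by omega
      simpa [hfn] using hcd

section Sigma0

variable {V : Type} {S : Finset ℕ} {D : DB V Sig}

theorem allS0_append {u v : List Sig} (hu : allS0 S u) (hv : allS0 S v) : allS0 S (u ++ v) := by
  intro c hc
  rcases List.mem_append.1 hc with hc | hc
  exacts [hu c hc, hv c hc]

theorem allS0_singleton {c : Sig} (hc : inSigma0 S c) : allS0 S [c] := by
  simpa [allS0] using hc

theorem labelsIn.shade_mem (hD : labelsIn D (SigAlph S)) {a b : V} {ab d τ : Bool} {σ : ℕ}
    (h : D a (.base ab d τ σ) b) : σ ∈ S := by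
  simpa [SigAlph, inSigma0] using hD _ _ _ h

def Sigma0Adj (S : Finset ℕ) (D : DB V Sig) (a b : V) : Prop := ∃ c, inSigma0 S c ∧ D a c b

abbrev Sigma0Walk (S : Finset ℕ) (D : DB V Sig) : V → V → Prop := ReflTransGen (Sigma0Adj S D)

theorem Sigma0Adj.of_mem {a b : V} {ab d τ : Bool} {σ : ℕ} (hσ : σ ∈ S)
    (h : D a (.base ab d τ σ) b) : Sigma0Adj S D a b :=
  ⟨.base ab d τ σ, hσ, h⟩

theorem labelsIn.sigma0Adj (hD : labelsIn D (SigAlph S)) {a b : V} {ab d τ : Bool} {σ : ℕ}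
    (h : D a (.base ab d τ σ) b) : Sigma0Adj S D a b :=
  .of_mem (hD.shade_mem h) h

theorem Sigma0Walk.exists_path {a b : V} (h : Sigma0Walk S D a b) :
    ∃ w, allS0 S w ∧ pathSat D a w b := by
  induction h with
  | refl => exact ⟨[], fun _ h => by simp at h, rfl⟩
  | tail _ hbc ih =>
    obtain ⟨w, hw, hp⟩ := ih
    obtain ⟨c, hc, e⟩ := hbc
    exact ⟨w ++ [c], allS0_append hw (allS0_singleton hc), (pathSat_append w).2 ⟨_, hp, by simpa⟩⟩

end Sigma0

theorem transGen_qry_iff {V γ : Type} {D : DB V γ} {L : Language γ} (hL : [] ∉ L) {a b : V} :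
    TransGen (fun a b => (a, b) ∈ qry L D) a b ↔ ∃ w ∈ KStar.kstar L, w ≠ [] ∧ pathSat D a w b := by
  constructor
  · intro h
    induction h with
    | single h =>
      obtain ⟨w, hw, hp⟩ := h
      exact ⟨w, Language.mem_kstar.2 ⟨[w], by simp, by simpa⟩, by grind, hp⟩
    | tail _ hbc ih =>
      obtain ⟨w, hw, -, hp⟩ := ih
      obtain ⟨v, hv, hq⟩ := hbc
      obtain ⟨bl, rfl, hbl⟩ := Language.mem_kstar.1 hw
      refine ⟨bl.flatten ++ v, Language.mem_kstar.2 ⟨bl ++ [v], by simp, by grind⟩,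
        fun h => hL ((List.append_eq_nil_iff.1 h).2 ▸ hv), (pathSat_append _).2 ⟨_, hp, hq⟩⟩
  · rintro ⟨w, hw, hne, hp⟩
    obtain ⟨bl, rfl, hbl⟩ := Language.mem_kstar.1 hw
    induction bl generalizing a with
    | nil => simp at hne
    | cons v bl ih =>
      obtain ⟨z, hv, hrest⟩ := (pathSat_append v).1 (by simpa using hp)
      have hz : (a, z) ∈ qry L D := ⟨v, hbl v (by simp), hv⟩
      by_cases hbl' : bl.flatten = []
      · rw [hbl'] at hrest
        obtain rfl : z = b := hrest
        exact .single hz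
      · have hbl'' : ∀ y ∈ bl, y ∈ L := fun y hy => hbl y (by simp [hy])
        exact .head hz (ih hbl'' (Language.mem_kstar.2 ⟨bl, rfl, hbl''⟩) hbl' hrest)

section Queries

variable {S : Finset ℕ} {F : Finset ((Bool × ℕ) × (Bool × ℕ))}

/-- Warm structures (`τ = true`) are entered by `β`, cold ones by `α`. -/
def startLetter (τ : Bool) : Sig := cond τ .beta .alpha

/-- Detects a letter of temperature `!τ` on a path entered by `startLetter τ`. -/
def uglyQuery (S : Finset ℕ) (τ : Bool) : Language Sig := cond τ (Qugly2 S) (Qugly1 S)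

def letterQuery (S : Finset ℕ) (ab d : Bool) : Language Sig :=
  {w | ∃ τ, ∃ σ ∈ S, w = [.base ab d τ σ]}

/-- `Q⁴` for `ab = true`, `Q³` for `ab = false`: the two paths around a unit square from a point
of type `ab`, the one leaving in direction `d` having temperature `ab == d`. -/
def cornerQuery (S : Finset ℕ) (ab : Bool) : Language Sig :=
  {w | ∃ d, ∃ σ ∈ S, ∃ σ' ∈ S, w = [.base ab d (ab == d) σ, .base (!ab) (!d) (ab == d) σ']}

theorem letterQuery_eq (ab d : Bool) :
    letterQuery S ab d = cond ab (cond d (Qg7a S + Qg7b S) (Qg8a S + Qg8b S))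
      (cond d (Qg5a S + Qg5b S) (Qg6a S + Qg6b S)) := by
  refine Language.ext fun w => ?_
  cases ab <;> cases d <;> simp only [cond_true, cond_false, Language.mem_add] <;> constructor
  all_goals first
    | rintro ⟨τ, σ, hσ, rfl⟩
      cases τ <;> first | exact Or.inl ⟨_, rfl, σ, hσ, rfl⟩ | exact Or.inr ⟨_, rfl, σ, hσ, rfl⟩
    | rintro (⟨_, rfl, σ, hσ, rfl⟩ | ⟨_, rfl, σ, hσ, rfl⟩) <;> exact ⟨_, σ, hσ, rfl⟩

theorem cornerQuery_eq (ab : Bool) :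
    cornerQuery S ab = cond ab (Qg4a S + Qg4b S) (Qg3a S + Qg3b S) := by
  refine Language.ext fun w => ?_
  cases ab <;> simp only [cond_true, cond_false, Language.mem_add] <;> constructor
  all_goals first
    | rintro ⟨d, σ, hσ, σ', hσ', rfl⟩
      cases d
      · exact Or.inl ⟨_, _, rfl, ⟨σ, hσ, rfl⟩, σ', hσ', rfl⟩
      · exact Or.inr ⟨_, _, rfl, ⟨σ, hσ, rfl⟩, σ', hσ', rfl⟩
    | rintro (⟨_, _, rfl, ⟨σ, hσ, rfl⟩, σ', hσ', rfl⟩ | ⟨_, _, rfl, ⟨σ, hσ, rfl⟩, σ', hσ', rfl⟩)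
      exacts [⟨false, σ, hσ, σ', hσ', rfl⟩, ⟨true, σ, hσ, σ', hσ', rfl⟩]

theorem letterQuery_mem_QQ (ab d : Bool) : letterQuery S ab d ∈ QQ S F := by
  rw [letterQuery_eq]
  cases ab <;> cases d <;> simp [QQ, Qgood]

theorem cornerQuery_mem_QQ (ab : Bool) : cornerQuery S ab ∈ QQ S F := by
  rw [cornerQuery_eq]
  cases ab <;> simp [QQ, Qgood]

theorem Qg1_mem_QQ : Qg1 ∈ QQ S F := by simp [QQ, Qgood]
theorem Qg2_mem_QQ : Qg2 ∈ QQ S F := by simp [QQ, Qgood]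
theorem Qbad1_mem_QQ : Qbad1 S ∈ QQ S F := by simp [QQ, Qbad]
theorem Qbad2_mem_QQ : Qbad2 S ∈ QQ S F := by simp [QQ, Qbad]
theorem QbadF_mem_QQ {p} (hp : p ∈ F) : QbadF S p.1.1 p.1.2 p.2.1 p.2.2 ∈ QQ S F :=
  Or.inl (Or.inr (Or.inr ⟨p, hp, rfl⟩))
theorem uglyQuery_mem_QQ (τ : Bool) : uglyQuery S τ ∈ QQ S F := by
  cases τ <;> simp [QQ, Qugly, uglyQuery]

theorem mem_Q0L {w : List Sig} : w ∈ Q0L S F ↔ w ∈ Qstart S ∨ w ∈ Qbad1 S ∨ w ∈ Qbad2 S ∨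
    w ∈ QbadFSum S F ∨ w ∈ Qugly1 S ∨ w ∈ Qugly2 S := by
  simp only [Q0L, Language.mem_add]
  tauto

theorem Qstart_le_Q0L : Qstart S ≤ Q0L S F := fun _ h => mem_Q0L.2 (by tauto)
theorem Qbad1_le_Q0L : Qbad1 S ≤ Q0L S F := fun _ h => mem_Q0L.2 (by tauto)
theorem Qbad2_le_Q0L : Qbad2 S ≤ Q0L S F := fun _ h => mem_Q0L.2 (by tauto)
theorem QbadF_le_Q0L {p} (hp : p ∈ F) : QbadF S p.1.1 p.1.2 p.2.1 p.2.2 ≤ Q0L S F :=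
  fun w h => mem_Q0L.2 (Or.inr (Or.inr (Or.inr (Or.inl (show w ∈ QbadFSum S F from ⟨p, hp, h⟩)))))
theorem uglyQuery_le_Q0L (τ : Bool) : uglyQuery S τ ≤ Q0L S F := by
  cases τ <;> exact fun _ h => mem_Q0L.2 (by simp only [uglyQuery, cond] at h; tauto)

variable {V : Type} {D : DB V Sig} {a b : V}

theorem mem_qry_Qg1 : (a, b) ∈ qry Qg1 D ↔ D a .omega b :=
  ⟨fun ⟨_, hw, hp⟩ => by rw [hw] at hp; simpa using hp, fun h => ⟨_, rfl, by simpa⟩⟩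

theorem mem_qry_Qg2 : (a, b) ∈ qry Qg2 D ↔ ∃ τ, D a (startLetter τ) b := by
  constructor
  · rintro ⟨w, hw | hw, hp⟩ <;> rw [hw] at hp
    exacts [⟨false, by simpa [startLetter] using hp⟩, ⟨true, by simpa [startLetter] using hp⟩]
  · rintro ⟨τ | τ, h⟩
    exacts [⟨_, Or.inl rfl, by simpa [startLetter] using h⟩,
      ⟨_, Or.inr rfl, by simpa [startLetter] using h⟩]

theorem mem_qry_letterQuery {ab d : Bool} :
    (a, b) ∈ qry (letterQuery S ab d) D ↔ ∃ τ, ∃ σ ∈ S, D a (.base ab d τ σ) b := by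
  constructor
  · rintro ⟨_, ⟨τ, σ, hσ, rfl⟩, hp⟩
    exact ⟨τ, σ, hσ, by simpa using hp⟩
  · rintro ⟨τ, σ, hσ, h⟩
    exact ⟨_, ⟨τ, σ, hσ, rfl⟩, by simpa⟩

theorem mem_qry_cornerQuery {ab : Bool} :
    (a, b) ∈ qry (cornerQuery S ab) D ↔ ∃ d z, ∃ σ ∈ S, ∃ σ' ∈ S,
      D a (.base ab d (ab == d) σ) z ∧ D z (.base (!ab) (!d) (ab == d) σ') b := by
  constructor
  · rintro ⟨_, ⟨d, σ, hσ, σ', hσ', rfl⟩, hp⟩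
    obtain ⟨z, h₁, h₂⟩ := pathSat_pair.1 hp
    exact ⟨d, z, σ, hσ, σ', hσ', h₁, h₂⟩
  · rintro ⟨d, z, σ, hσ, σ', hσ', h₁, h₂⟩
    exact ⟨_, ⟨d, σ, hσ, σ', hσ', rfl⟩, pathSat_pair.2 ⟨z, h₁, h₂⟩⟩

theorem mem_qry_startBlock :
    (a, b) ∈ qry (startBlock S) D ↔ ∃ z, (∃ σ ∈ S, D a (.base true false false σ) z) ∧
      ∃ σ ∈ S, D z (.base false true false σ) b := by
  constructor
  · rintro ⟨_, ⟨_, _, rfl, ⟨σ, hσ, rfl⟩, σ', hσ', rfl⟩, hp⟩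
    obtain ⟨z, h₁, h₂⟩ := pathSat_pair.1 hp
    exact ⟨z, ⟨σ, hσ, h₁⟩, σ', hσ', h₂⟩
  · rintro ⟨z, ⟨σ, hσ, h₁⟩, σ', hσ', h₂⟩
    exact ⟨_, ⟨_, _, rfl, ⟨σ, hσ, rfl⟩, σ', hσ', rfl⟩, pathSat_pair.2 ⟨z, h₁, h₂⟩⟩

theorem mem_qry_Qstart_iff_transGen {x y : V} : (x, y) ∈ qry (Qstart S) D ↔ ∃ a b, D x .alpha a ∧
    TransGen (fun a b => (a, b) ∈ qry (startBlock S) D) a b ∧ D b .omega y := by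
  have hnil : [] ∉ startBlock S := fun ⟨_, _, h, _⟩ => by simp at h
  simp only [transGen_qry_iff hnil]
  constructor
  · rintro ⟨_, ⟨u, hu, hne, rfl⟩, a, hxa, hp⟩
    obtain ⟨b, hab, hby⟩ := (pathSat_append u).1 hp
    exact ⟨a, b, hxa, ⟨u, hu, hne, hab⟩, by simpa using hby⟩
  · rintro ⟨a, b, hxa, ⟨u, hu, hne, hab⟩, hby⟩
    exact ⟨_, ⟨u, hu, hne, rfl⟩, a, hxa, (pathSat_append u).2 ⟨b, hab, by simpa⟩⟩

end Queries

section Agreement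

variable {V : Type} {S : Finset ℕ} {F : Finset ((Bool × ℕ) × (Bool × ℕ))}

def Agree (S : Finset ℕ) (F : Finset ((Bool × ℕ) × (Bool × ℕ))) (D₁ D₂ : DB V Sig) : Prop :=
  ∀ L ∈ QQ S F, qry L D₁ = qry L D₂

namespace Agree

variable {D₁ D₂ : DB V Sig} (h : Agree S F D₁ D₂) {a b : V}
include h

theorem symm : Agree S F D₂ D₁ := fun L hL => (h L hL).symm

theorem mem_qry {L : Language Sig} (hL : L ∈ QQ S F) (hab : (a, b) ∈ qry L D₁) :
    (a, b) ∈ qry L D₂ :=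
  h L hL ▸ hab

theorem omega (e : D₁ a .omega b) : D₂ a .omega b :=
  mem_qry_Qg1.1 (h.mem_qry Qg1_mem_QQ (mem_qry_Qg1.2 e))

theorem start {τ : Bool} (e : D₁ a (startLetter τ) b) : ∃ τ', D₂ a (startLetter τ') b :=
  mem_qry_Qg2.1 (h.mem_qry Qg2_mem_QQ (mem_qry_Qg2.2 ⟨τ, e⟩))

theorem letter {ab d τ : Bool} {σ : ℕ} (hσ : σ ∈ S) (e : D₁ a (.base ab d τ σ) b) :
    ∃ τ', ∃ σ' ∈ S, D₂ a (.base ab d τ' σ') b :=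
  mem_qry_letterQuery.1 (h.mem_qry (letterQuery_mem_QQ ab d) (mem_qry_letterQuery.2 ⟨τ, σ, hσ, e⟩))

theorem corner {ab d : Bool} {z : V} {σ σ' : ℕ} (hσ : σ ∈ S) (hσ' : σ' ∈ S)
    (e₁ : D₁ a (.base ab d (ab == d) σ) z) (e₂ : D₁ z (.base (!ab) (!d) (ab == d) σ') b) :
    ∃ d' z', ∃ ρ ∈ S, ∃ ρ' ∈ S,
      D₂ a (.base ab d' (ab == d') ρ) z' ∧ D₂ z' (.base (!ab) (!d') (ab == d') ρ') b :=
  mem_qry_cornerQuery.1 (h.mem_qry (cornerQuery_mem_QQ ab)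
    (mem_qry_cornerQuery.2 ⟨d, z, σ, hσ, σ', hσ', e₁, e₂⟩))

end Agree

end Agreement

section Escape

variable {V : Type} {S : Finset ℕ} {D : DB V Sig} {x y s t a b : V}

theorem mem_qry_uglyQuery (hD : labelsIn D (SigAlph S)) {τ ab d : Bool} {σ : ℕ}
    (hx : D x (startLetter τ) s) (hsa : Sigma0Walk S D s a) (e : D a (.base ab d (!τ) σ) b)
    (hbt : Sigma0Walk S D b t) (hy : D t .omega y) : (x, y) ∈ qry (uglyQuery S τ) D := by
  obtain ⟨u, hu, hpu⟩ := hsa.exists_path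
  obtain ⟨u', hu', hpu'⟩ := hbt.exists_path
  refine ⟨startLetter τ :: (u ++ .base ab d (!τ) σ :: (u' ++ [.omega])), ?_,
    s, hx, (pathSat_append u).2 ⟨a, hpu, b, e, (pathSat_append u').2 ⟨t, hpu', by simpa⟩⟩⟩
  cases τ <;> exact ⟨u, .base ab d _ σ, u', hu, hu', hD.shade_mem e, ⟨ab, d, σ, rfl⟩, rfl⟩

def RouteTemp (S : Finset ℕ) (D : DB V Sig) (s t : V) (τ : Bool) : Prop :=
  ∀ ⦃a b : V⦄ ⦃ab d τ' : Bool⦄ ⦃σ : ℕ⦄,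
    Sigma0Walk S D s a → D a (.base ab d τ' σ) b → Sigma0Walk S D b t → τ' = τ

theorem routeTemp_of_not_mem_qry (hD : labelsIn D (SigAlph S)) {τ : Bool}
    (hx : D x (startLetter τ) s) (hy : D t .omega y) (h : (x, y) ∉ qry (uglyQuery S τ) D) :
    RouteTemp S D s t τ := by
  intro a b ab d τ' σ hsa e hbt
  by_contra hne
  rw [← Bool.ne_not, not_not] at hne
  exact h (mem_qry_uglyQuery hD hx hsa (hne ▸ e) hbt hy)

theorem mem_qry_Qbad1 {S : Finset ℕ} {σ : ℕ} (hσ : σ ∈ S) (hσ0 : σ ≠ 0) (hx : D x .beta s)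
    (e : D s (.base true true true σ) b) (hbt : Sigma0Walk S D b t) (hy : D t .omega y) :
    (x, y) ∈ qry (Qbad1 S) D := by
  obtain ⟨u, hu, hpu⟩ := hbt.exists_path
  exact ⟨_, ⟨σ, u, hσ, hσ0, hu, rfl⟩, s, hx, b, e, (pathSat_append u).2 ⟨t, hpu, by simpa⟩⟩

theorem mem_qry_Qbad2 {σ : ℕ} (hσ : σ ∈ S) (hσ0 : σ ≠ 0) (hx : D x .beta s)
    (hsa : Sigma0Walk S D s a) (e : D a (.base false false true σ) t) (hy : D t .omega y) :
    (x, y) ∈ qry (Qbad2 S) D := by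
  obtain ⟨u, hu, hpu⟩ := hsa.exists_path
  exact ⟨_, ⟨σ, u, hσ, hσ0, hu, rfl⟩, s, hx, (pathSat_append u).2 ⟨a, hpu, t, e, by simpa⟩⟩

theorem mem_qry_QbadF {z : V} {b₁ b₂ d d' : Bool} {σ σ' : ℕ} (hx : D x .beta s)
    (hsa : Sigma0Walk S D s a) (e₁ : D a (.base b₁ d true σ) z) (e₂ : D z (.base b₂ d' true σ') b)
    (hbt : Sigma0Walk S D b t) (hy : D t .omega y) : (x, y) ∈ qry (QbadF S d σ d' σ') D := by
  obtain ⟨u, hu, hpu⟩ := hsa.exists_path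
  obtain ⟨u', hu', hpu'⟩ := hbt.exists_path
  exact ⟨_, ⟨u, u', b₁, b₂, hu, hu', rfl⟩, s, hx,
    (pathSat_append u).2 ⟨a, hpu, z, e₁, b, e₂, (pathSat_append u').2 ⟨t, hpu', by simpa⟩⟩⟩

end Escape

/-- The `A`/`B` component of the letters leaving the grid point `(i, j)`. -/
def gridAB (i j : ℕ) : Bool := decide (Even (i + j))

@[simp] theorem gridAB_self (i : ℕ) : gridAB i i = true := by simp [gridAB]

theorem gridAB_comm (i j : ℕ) : gridAB i j = gridAB j i := by simp [gridAB, add_comm]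

@[simp] theorem gridAB_succ_left (i j : ℕ) : gridAB (i + 1) j = !gridAB i j := by
  simp [gridAB, add_right_comm i 1 j, Nat.even_add_one, -Nat.not_even_iff_odd]

@[simp] theorem gridAB_succ_right (i j : ℕ) : gridAB i (j + 1) = !gridAB i j := by
  simp [gridAB, ← add_assoc, Nat.even_add_one, -Nat.not_even_iff_odd]

/-! `E ab d a b`: an edge from `a` to `b` in direction `d` (`false` horizontal, `true` vertical),
leaving a grid point of type `ab`. -/

section GridCompletion

variable {V : Type} {E : Bool → Bool → V → V → Prop}

def GridAdj (E : Bool → Bool → V → V → Prop) (a b : V) : Prop := ∃ ab d, E ab d a b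

def SquareFlip (E : Bool → Bool → V → V → Prop) (s t : V) : Prop :=
  ∀ ⦃ab d : Bool⦄ ⦃a z b : V⦄, ReflTransGen (GridAdj E) s a → ReflTransGen (GridAdj E) b t →
    E ab d a z → E (!ab) (!d) z b → ∃ z', E ab (!d) a z' ∧ E (!ab) d z' b

def Stair (E : Bool → Bool → V → V → Prop) (u z : ℕ → V) (m : ℕ) (c : Bool) : Prop :=
  ∀ i < m, E true c (u i) (z i) ∧ E false (!c) (z i) (u (i + 1))

/-- The part `i ≤ j ≤ i + k` of a grid with diagonal `u`; for `d = true` this is the transpose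
of the part below the diagonal. -/
structure Band (E : Bool → Bool → V → V → Prop) (u : ℕ → V) (m : ℕ) (d : Bool) (k : ℕ)
    (p : ℕ → ℕ → V) : Prop where
  diag : ∀ i, p i i = u i
  fst : ∀ i j, i < j → j ≤ m → j ≤ i + k → E (gridAB i j) d (p i j) (p (i + 1) j)
  snd : ∀ i j, i ≤ j → j < m → j < i + k → E (gridAB i j) (!d) (p i j) (p i (j + 1))

structure IsGrid (E : Bool → Bool → V → V → Prop) (m : ℕ) (P : ℕ → ℕ → V) : Prop where
  horiz : ∀ i j, i < m → j ≤ m → E (gridAB i j) false (P i j) (P (i + 1) j)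
  vert : ∀ i j, i ≤ m → j < m → E (gridAB i j) true (P i j) (P i (j + 1))

variable {u z : ℕ → V} {m : ℕ}

theorem reflTransGen_gridAdj {ab d : Bool} {a b : V} (h : E ab d a b) :
    ReflTransGen (GridAdj E) a b :=
  .single ⟨ab, d, h⟩

theorem Stair.reach {c : Bool} (h : Stair E u z m c) {a b : ℕ} (hab : a ≤ b) (hb : b ≤ m) :
    ReflTransGen (GridAdj E) (u a) (u b) :=
  reflTransGen_of_seq u hab fun i _ hi =>
    (reflTransGen_gridAdj (h i (by omega)).1).trans (reflTransGen_gridAdj (h i (by omega)).2)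

theorem Stair.flip {c : Bool} (hsq : SquareFlip E (u 0) (u m)) (h : Stair E u z m c) :
    ∃ z', Stair E u z' m (!c) := by
  have flip : ∀ i < m, ∃ z', E true (!c) (u i) z' ∧ E false (!!c) z' (u (i + 1)) := fun i hi => by
    simpa using
      hsq (h.reach (Nat.zero_le i) hi.le) (h.reach (by omega) le_rfl) (h i hi).1 (h i hi).2
  have : Nonempty V := ⟨u 0⟩
  choose! z' hz' using flip
  exact ⟨z', hz'⟩

namespace Band

variable {d : Bool} {k : ℕ} {p : ℕ → ℕ → V}

theorem one_of_stair (h : Stair E u z m (!d)) :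
    Band E u m d 1 (fun i j => if j = i + 1 then z i else u i) where
  diag i := by simp
  fst i j hij _ hj := by
    obtain rfl : j = i + 1 := by omega
    simpa [Nat.succ_ne_self] using (h i (by omega)).2
  snd i j hij hj _ := by
    obtain rfl : j = i := by omega
    simpa using (h j hj).1

variable (h : Band E u m d k p) (hk : 1 ≤ k)
include h

theorem reach_snd {i j j' : ℕ} (hij : i ≤ j) (hjj' : j ≤ j') (hj' : j' ≤ m) (hk' : j' ≤ i + k) :
    ReflTransGen (GridAdj E) (p i j) (p i j') :=
  reflTransGen_of_seq (p i) hjj' fun l _ hl =>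
    reflTransGen_gridAdj (h.snd i l (by omega) (by omega) (by omega))

theorem reach_fst {i i' j : ℕ} (hii' : i ≤ i') (hi'j : i' ≤ j) (hj : j ≤ m) (hk' : j ≤ i + k) :
    ReflTransGen (GridAdj E) (p i j) (p i' j) :=
  reflTransGen_of_seq (p · j) hii' fun l _ hl =>
    reflTransGen_gridAdj (h.fst l j (by omega) hj (by omega))

include hk

theorem reach_diag {a b : ℕ} (hab : a ≤ b) (hb : b ≤ m) : ReflTransGen (GridAdj E) (u a) (u b) :=
  reflTransGen_of_seq u hab fun i _ hi => by
    rw [← h.diag i, ← h.diag (i + 1)]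
    exact (reflTransGen_gridAdj (h.snd i i le_rfl (by omega) (by omega))).trans
      (reflTransGen_gridAdj (h.fst i (i + 1) (by omega) (by omega) (by omega)))

theorem reach_from {i j : ℕ} (hij : i ≤ j) (hj : j ≤ m) (hk' : j ≤ i + k) :
    ReflTransGen (GridAdj E) (u 0) (p i j) :=
  (h.reach_diag hk (Nat.zero_le i) (by omega)).trans (h.diag i ▸ h.reach_snd le_rfl hij hj hk')

theorem reach_to {i j : ℕ} (hij : i ≤ j) (hj : j ≤ m) (hk' : j ≤ i + k) :
    ReflTransGen (GridAdj E) (p i j) (u m) :=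
  (h.diag j ▸ h.reach_fst hij le_rfl hj hk').trans (h.reach_diag hk hj le_rfl)

theorem succ (hsq : SquareFlip E (u 0) (u m)) : ∃ p', Band E u m d (k + 1) p' := by
  have flip : ∀ i, i + k + 1 ≤ m → ∃ q, E (gridAB i (i + k)) (!d) (p i (i + k)) q ∧
      E (gridAB i (i + k + 1)) d q (p (i + 1) (i + k + 1)) := fun i hi => by
    have e₁ := h.fst i (i + k) (by omega) (by omega) le_rfl
    have e₂ := h.snd (i + 1) (i + k) (by omega) (by omega) (by omega)
    rw [gridAB_succ_left] at e₂
    simpa [← add_assoc] using hsq (h.reach_from hk (by omega) (by omega) le_rfl)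
      (h.reach_to hk (by omega) hi (by omega)) e₁ e₂
  have : Nonempty V := ⟨u 0⟩
  choose! q hq using flip
  refine ⟨fun i j => if j = i + k + 1 then q i else p i j, ⟨fun i => ?_, ?_, ?_⟩⟩
  · simp only [if_neg (show i ≠ i + k + 1 by omega)]
    exact h.diag i
  · intro i j hij hj hjk
    rcases Nat.lt_or_ge j (i + k + 1) with hlt | hge
    · simp only [if_neg hlt.ne, if_neg (show j ≠ i + 1 + k + 1 by omega)]
      exact h.fst i j hij hj (by omega)
    · obtain rfl : j = i + k + 1 := by omega
      simpa [show i + k + 1 ≠ i + 1 + k + 1 by omega] using (hq i hj).2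
  · intro i j hij hj hjk
    rcases Nat.lt_or_ge j (i + k) with hlt | hge
    · simp only [if_neg (show j ≠ i + k + 1 by omega), if_neg (show j + 1 ≠ i + k + 1 by omega)]
      exact h.snd i j hij hj hlt
    · obtain rfl : j = i + k := by omega
      simpa using (hq i (by omega)).1

end Band

theorem exists_band {c : Bool} (hsq : SquareFlip E (u 0) (u m)) (h : Stair E u z m c)
    (hm : 1 ≤ m) (d : Bool) : ∃ p, Band E u m d m p := by
  have h₁ : ∃ p, Band E u m d 1 p := by
    rcases Bool.eq_or_eq_not c d with rfl | rfl
    · obtain ⟨z', h'⟩ := h.flip hsq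
      exact ⟨_, .one_of_stair h'⟩
    · exact ⟨_, .one_of_stair h⟩
  suffices ∀ k, 1 ≤ k → ∃ p, Band E u m d k p from this m hm
  intro k hk
  induction k, hk using Nat.le_induction with
  | base => exact h₁
  | succ k hk ih =>
    obtain ⟨p, hp⟩ := ih
    exact hp.succ hk hsq

theorem exists_isGrid {c : Bool} (hsq : SquareFlip E (u 0) (u m)) (h : Stair E u z m c)
    (hm : 1 ≤ m) : ∃ P, P 0 0 = u 0 ∧ P m m = u m ∧ IsGrid E m P := by
  obtain ⟨p, hp⟩ := exists_band hsq h hm false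
  obtain ⟨q, hq⟩ := exists_band hsq h hm true
  set P : ℕ → ℕ → V := fun i j => if i ≤ j then p i j else q j i
  have hPp : ∀ i j, i ≤ j → P i j = p i j := fun i j hij => if_pos hij
  have hPq : ∀ i j, j ≤ i → P i j = q j i := fun i j hji => by
    rcases hji.lt_or_eq with hlt | rfl
    · exact if_neg (by omega)
    · rw [hPp j j le_rfl, hp.diag, hq.diag]
  refine ⟨P, by rw [hPp 0 0 le_rfl, hp.diag], by rw [hPp m m le_rfl, hp.diag], ?_, ?_⟩
  · intro i j hi hj
    rcases Nat.lt_or_ge i j with hij | hij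
    · rw [hPp i j hij.le, hPp (i + 1) j hij]
      exact hp.fst i j hij hj (by omega)
    · rw [hPq i j hij, hPq (i + 1) j (by omega), gridAB_comm]
      simpa using hq.snd j i hij hi (by omega)
  · intro i j hi hj
    rcases Nat.lt_or_ge j i with hij | hij
    · rw [hPq i j hij.le, hPq i (j + 1) hij, gridAB_comm]
      exact hq.fst j i hij hi (by omega)
    · rw [hPp i j hij, hPp i (j + 1) (by omega)]
      simpa using hp.snd i j hij hj (by omega)

namespace IsGrid

variable {P : ℕ → ℕ → V} (h : IsGrid E m P)
include h

theorem reach {i j i' j' : ℕ} (hii' : i ≤ i') (hjj' : j ≤ j') (hi' : i' ≤ m) (hj' : j' ≤ m) :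
    ReflTransGen (GridAdj E) (P i j) (P i' j') :=
  (reflTransGen_of_seq (P · j) hii' fun l _ hl =>
    reflTransGen_gridAdj (h.horiz l j (by omega) (by omega))).trans
  (reflTransGen_of_seq (P i') hjj' fun l _ hl =>
    reflTransGen_gridAdj (h.vert i' l hi' (by omega)))

end IsGrid

end GridCompletion

section Staircases

variable {V : Type} {S : Finset ℕ} {F : Finset ((Bool × ℕ) × (Bool × ℕ))} {D D₁ D₂ : DB V Sig}
  {u z : ℕ → V} {m : ℕ}

def TempStair (S : Finset ℕ) (D : DB V Sig) (τ : Bool) (u z : ℕ → V) (m : ℕ) : Prop :=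
  ∀ i < m, (∃ σ ∈ S, D (u i) (.base true false τ σ) (z i)) ∧
    ∃ σ ∈ S, D (z i) (.base false true τ σ) (u (i + 1))

theorem mem_qry_Qstart_iff_tempStair {x y : V} : (x, y) ∈ qry (Qstart S) D ↔
    ∃ m, 1 ≤ m ∧ ∃ u z, D x .alpha (u 0) ∧ TempStair S D false u z m ∧ D (u m) .omega y := by
  rw [mem_qry_Qstart_iff_transGen]
  constructor
  · rintro ⟨a, b, hxa, hab, hby⟩
    obtain ⟨m, hm, u, rfl, rfl, hu⟩ := hab.exists_seq
    have : Nonempty V := ⟨x⟩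
    choose! z hz using fun i hi => mem_qry_startBlock.1 (hu i hi)
    exact ⟨m, hm, u, z, hxa, hz, hby⟩
  · rintro ⟨m, hm, u, z, hxa, hst, hy⟩
    have step : ∀ i < m, (u i, u (i + 1)) ∈ qry (startBlock S) D := fun i hi =>
      mem_qry_startBlock.2 ⟨z i, hst i hi⟩
    exact ⟨u 0, u m, hxa, .head' (step 0 hm)
      (reflTransGen_of_seq u hm fun i _ hi => .single (step i hi)), hy⟩

theorem TempStair.transfer {τ₁ τ : Bool} (hst : TempStair S D₁ τ₁ u z m)
    (hag : Agree S F D₁ D₂) (hr : RouteTemp S D₂ (u 0) (u m) τ) : TempStair S D₂ τ u z m := by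
  have h₂ : ∀ i < m, (∃ τ', ∃ σ ∈ S, D₂ (u i) (.base true false τ' σ) (z i)) ∧
      ∃ τ', ∃ σ ∈ S, D₂ (z i) (.base false true τ' σ) (u (i + 1)) := fun i hi =>
    have ⟨⟨_, hσ, e₁⟩, _, hσ', e₂⟩ := hst i hi
    ⟨hag.letter hσ e₁, hag.letter hσ' e₂⟩
  have walk : ∀ a b, a ≤ b → b ≤ m → Sigma0Walk S D₂ (u a) (u b) := fun a b hab hb =>
    reflTransGen_of_seq u hab fun i _ hi =>
      have ⟨⟨_, _, hσ, e₁⟩, _, _, hσ', e₂⟩ := h₂ i (by omega)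
      (ReflTransGen.single (.of_mem hσ e₁)).tail (.of_mem hσ' e₂)
  intro i hi
  obtain ⟨⟨τ₁, σ, hσ, e₁⟩, τ₂, σ', hσ', e₂⟩ := h₂ i hi
  have hτ₁ : τ₁ = τ :=
    hr (walk 0 i (by omega) hi.le) e₁ (.head (.of_mem hσ' e₂) (walk _ m hi le_rfl))
  have hτ₂ : τ₂ = τ :=
    hr ((walk 0 i (by omega) hi.le).tail (.of_mem hσ e₁)) e₂ (walk _ m hi le_rfl)
  exact ⟨⟨σ, hσ, hτ₁ ▸ e₁⟩, σ', hσ', hτ₂ ▸ e₂⟩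

end Staircases

section TwinEdges

variable {V : Type} {S : Finset ℕ} {F : Finset ((Bool × ℕ) × (Bool × ℕ))} {D₁ D₂ : DB V Sig}

def TwinEdge (D₁ D₂ : DB V Sig) (ab d : Bool) (a b : V) : Prop :=
  (∃ σ, D₁ a (.base ab d false σ) b) ∧ ∃ σ, D₂ a (.base ab d true σ) b

theorem TempStair.twinEdge {u z : ℕ → V} {m : ℕ} (h₁ : TempStair S D₁ false u z m)
    (h₂ : TempStair S D₂ true u z m) : Stair (TwinEdge D₁ D₂) u z m false := fun i hi =>
  have ⟨⟨_, _, e₁⟩, _, _, e₂⟩ := h₁ i hi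
  have ⟨⟨_, _, f₁⟩, _, _, f₂⟩ := h₂ i hi
  ⟨⟨⟨_, e₁⟩, _, f₁⟩, ⟨_, e₂⟩, _, f₂⟩

theorem reflTransGen_twinEdge_fst (h₁ : labelsIn D₁ (SigAlph S)) {a b : V}
    (h : ReflTransGen (GridAdj (TwinEdge D₁ D₂)) a b) : Sigma0Walk S D₁ a b :=
  ReflTransGen.mono (fun _ _ ⟨_, _, ⟨_, e⟩, _⟩ => h₁.sigma0Adj e) _ _ h

theorem reflTransGen_twinEdge_snd (h₂ : labelsIn D₂ (SigAlph S)) {a b : V}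
    (h : ReflTransGen (GridAdj (TwinEdge D₁ D₂)) a b) : Sigma0Walk S D₂ a b :=
  ReflTransGen.mono (fun _ _ ⟨_, _, _, _, e⟩ => h₂.sigma0Adj e) _ _ h

/-- The square flip in the structure `Da` of route temperature `τ`: the corner query moves the
path to `Db` (where route temperature `!τ` forces it to the other side of the square), and the
letter queries bring its edges back to `Da`. -/
theorem exists_corner_flip {Da Db : DB V Sig} (hag : Agree S F Da Db)
    (ha : labelsIn Da (SigAlph S)) (hb : labelsIn Db (SigAlph S)) {s t a z b : V}
    {ab d τ : Bool} {σ σ' : ℕ} (hra : RouteTemp S Da s t τ) (hrb : RouteTemp S Db s t (!τ))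
    (hsa : Sigma0Walk S Da s a) (hsa' : Sigma0Walk S Db s a)
    (hbt : Sigma0Walk S Da b t) (hbt' : Sigma0Walk S Db b t) (hτ : (ab == d) = τ)
    (e₁ : Da a (.base ab d τ σ) z) (e₂ : Da z (.base (!ab) (!d) τ σ') b) :
    ∃ z', ((∃ ρ, Da a (.base ab (!d) τ ρ) z') ∧ ∃ ρ, Db a (.base ab (!d) (!τ) ρ) z') ∧
      (∃ ρ, Da z' (.base (!ab) d τ ρ) b) ∧ ∃ ρ, Db z' (.base (!ab) d (!τ) ρ) b := by
  subst hτ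
  obtain ⟨d', z', ρ₁, hρ₁, ρ₂, hρ₂, f₁, f₂⟩ :=
    hag.corner (ha.shade_mem e₁) (ha.shade_mem e₂) e₁ e₂
  have hd' : (ab == d') = !(ab == d) := hrb hsa' f₁ (.head (hb.sigma0Adj f₂) hbt')
  obtain rfl : d' = !d := by revert hd'; cases ab <;> cases d <;> cases d' <;> decide
  obtain ⟨τ₁, _, _, g₁⟩ := hag.symm.letter hρ₁ f₁
  obtain ⟨τ₂, _, _, g₂⟩ := hag.symm.letter hρ₂ f₂
  obtain rfl : τ₁ = (ab == d) := hra hsa g₁ (.head (ha.sigma0Adj g₂) hbt)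
  obtain rfl : τ₂ = (ab == d) := hra (hsa.tail (ha.sigma0Adj g₁)) g₂ hbt
  rw [hd'] at f₁ f₂
  simp only [Bool.not_not] at f₂ g₂
  exact ⟨z', ⟨⟨_, g₁⟩, _, f₁⟩, ⟨_, g₂⟩, _, f₂⟩

theorem squareFlip_twinEdge (hag : Agree S F D₁ D₂) (h₁ : labelsIn D₁ (SigAlph S))
    (h₂ : labelsIn D₂ (SigAlph S)) {s t : V} (hr₁ : RouteTemp S D₁ s t false)
    (hr₂ : RouteTemp S D₂ s t true) : SquareFlip (TwinEdge D₁ D₂) s t := by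
  intro ab d a z b hsa hbt ⟨⟨σ₁, e₁⟩, σ₂, e₂⟩ ⟨⟨σ₃, e₃⟩, σ₄, e₄⟩
  have w₁ := reflTransGen_twinEdge_fst h₁ hsa
  have w₂ := reflTransGen_twinEdge_snd h₂ hsa
  have w₁' := reflTransGen_twinEdge_fst h₁ hbt
  have w₂' := reflTransGen_twinEdge_snd h₂ hbt
  cases hτ : (ab == d)
  · obtain ⟨z', ⟨f₁, g₁⟩, f₂, g₂⟩ :=
      exists_corner_flip hag h₁ h₂ hr₁ hr₂ w₁ w₂ w₁' w₂' hτ e₁ e₃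
    exact ⟨z', ⟨f₁, g₁⟩, f₂, g₂⟩
  · obtain ⟨z', ⟨f₁, g₁⟩, f₂, g₂⟩ :=
      exists_corner_flip hag.symm h₂ h₁ hr₂ hr₁ w₂ w₁ w₂' w₁' hτ e₂ e₄
    exact ⟨z', ⟨g₁, f₁⟩, g₂, f₂⟩

end TwinEdges

section HardDirection

variable {V : Type} {S : Finset ℕ} {F : Finset ((Bool × ℕ) × (Bool × ℕ))} {D₁ D₂ : DB V Sig}

theorem gridAB_pred_self {m : ℕ} (hm : 1 ≤ m) : gridAB (m - 1) m = false := by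
  obtain ⟨k, rfl⟩ := Nat.exists_eq_add_of_le hm
  simp [add_comm 1 k]

theorem gridSol_of_isGrid (h₂ : labelsIn D₂ (SigAlph S)) {x y : V} {m : ℕ} {P : ℕ → ℕ → V}
    (hm : 1 ≤ m) (hP : IsGrid (TwinEdge D₁ D₂) m P) (hx : D₂ x .beta (P 0 0))
    (hy : D₂ (P m m) .omega y) (hesc : (x, y) ∉ qry (Q0L S F) D₂) : GridSol S F := by
  choose! hl hhl using fun i j hi hj => (hP.horiz i j hi hj).2
  choose! vl hvl using fun i j hi hj => (hP.vert i j hi hj).2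
  have walk : ∀ {i j i' j'}, i ≤ i' → j ≤ j' → i' ≤ m → j' ≤ m →
      Sigma0Walk S D₂ (P i j) (P i' j') := fun hii' hjj' hi' hj' =>
    reflTransGen_twinEdge_snd h₂ (hP.reach hii' hjj' hi' hj')
  have allowed : ∀ {i j i' j' i'' j'' : ℕ} {b₁ b₂ d d' : Bool} {σ σ' : ℕ},
      i ≤ m → j ≤ m → i'' ≤ m → j'' ≤ m →
      D₂ (P i j) (.base b₁ d true σ) (P i' j') → D₂ (P i' j') (.base b₂ d' true σ') (P i'' j'') →
      ((d, σ), (d', σ')) ∉ F := fun hi hj hi'' hj'' e₁ e₂ hF =>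
    hesc (qry_mono (QbadF_le_Q0L hF) (mem_qry_QbadF hx (walk (Nat.zero_le _) (Nat.zero_le _) hi hj)
      e₁ e₂ (walk hi'' hj'' le_rfl le_rfl) hy))
  refine ⟨m, hm, hl, vl, fun i j hi hj => h₂.shade_mem (hhl i j hi hj),
    fun i j hi hj => h₂.shade_mem (hvl i j hi hj), ?_, ?_,
    fun i j hi hj => allowed (by omega) hj (by omega) hj (hhl i j (by omega) hj) (hhl _ j hi hj),
    fun i j hi hj => allowed hi.le hj.le (by omega) (by omega) (hhl i j hi hj.le) (hvl _ j hi hj),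
    fun i j hi hj => allowed hi.le hj.le (by omega) (by omega) (hvl i j hi.le hj) (hhl i _ hi hj),
    fun i j hi hj => allowed hi (by omega) hi (by omega) (hvl i j hi (by omega)) (hvl i _ hi hj)⟩
  · by_contra h0
    have e := hvl 0 0 (Nat.zero_le m) hm
    rw [gridAB_self] at e
    exact hesc (qry_mono Qbad1_le_Q0L
      (mem_qry_Qbad1 (h₂.shade_mem e) h0 hx e (walk (Nat.zero_le m) hm le_rfl le_rfl) hy))
  · by_contra h0
    have e := hhl (m - 1) m (by omega) le_rfl
    rw [gridAB_pred_self hm, Nat.sub_add_cancel hm] at e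
    exact hesc (qry_mono Qbad2_le_Q0L
      (mem_qry_Qbad2 (h₂.shade_mem e) h0 hx (walk (Nat.zero_le _) (Nat.zero_le _) (by omega) le_rfl)
        e hy))

theorem mem_qry_Q0L_of_mem_qry_Qstart (hns : ¬ GridSol S F) (hag : Agree S F D₁ D₂)
    (h₁ : labelsIn D₁ (SigAlph S)) (h₂ : labelsIn D₂ (SigAlph S)) {x y : V}
    (h : (x, y) ∈ qry (Qstart S) D₁) : (x, y) ∈ qry (Q0L S F) D₂ := by
  by_contra hesc
  obtain ⟨m, hm, u, z, hx₁, hst₁, hy₁⟩ := mem_qry_Qstart_iff_tempStair.1 h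
  have hy₂ := hag.omega hy₁
  obtain ⟨τ, hx₂⟩ := hag.start (τ := false) hx₁
  have hr₂ : RouteTemp S D₂ (u 0) (u m) τ :=
    routeTemp_of_not_mem_qry h₂ hx₂ hy₂ fun h => hesc (qry_mono (uglyQuery_le_Q0L τ) h)
  have hst₂ := hst₁.transfer hag hr₂
  cases τ
  · exact hesc (qry_mono Qstart_le_Q0L
      (mem_qry_Qstart_iff_tempStair.2 ⟨m, hm, u, z, hx₂, hst₂, hy₂⟩))
  · have hr₁ : RouteTemp S D₁ (u 0) (u m) false :=
      routeTemp_of_not_mem_qry h₁ hx₁ hy₁ fun h =>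
        hesc (qry_mono (uglyQuery_le_Q0L false) (hag.mem_qry (uglyQuery_mem_QQ false) h))
    obtain ⟨P, hP0, hPm, hP⟩ :=
      exists_isGrid (squareFlip_twinEdge hag h₁ h₂ hr₁ hr₂) (hst₁.twinEdge hst₂) hm
    exact hns (gridSol_of_isGrid h₂ hm hP (hP0 ▸ hx₂) (hPm ▸ hy₂) hesc)

theorem determinesOn_of_not_gridSol (hns : ¬ GridSol S F) :
    DeterminesOn (SigAlph S) (QQ S F) (Q0L S F) := by
  have key : ∀ {V : Type} (D₁ D₂ : DB V Sig), labelsIn D₁ (SigAlph S) →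
      labelsIn D₂ (SigAlph S) → Agree S F D₁ D₂ → qry (Q0L S F) D₁ ⊆ qry (Q0L S F) D₂ := by
    rintro V D₁ D₂ h₁ h₂ hag ⟨x, y⟩ ⟨w, hw, hp⟩
    have transfer : ∀ L ∈ QQ S F, L ≤ Q0L S F → w ∈ L → (x, y) ∈ qry (Q0L S F) D₂ :=
      fun L hL hle hwL => qry_mono hle (hag.mem_qry hL ⟨w, hwL, hp⟩)
    rcases mem_Q0L.1 hw with h | h | h | ⟨p, hpF, h⟩ | h | h
    · exact mem_qry_Q0L_of_mem_qry_Qstart hns hag h₁ h₂ ⟨w, h, hp⟩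
    · exact transfer _ Qbad1_mem_QQ Qbad1_le_Q0L h
    · exact transfer _ Qbad2_mem_QQ Qbad2_le_Q0L h
    · exact transfer _ (QbadF_mem_QQ hpF) (QbadF_le_Q0L hpF) h
    · exact transfer _ (uglyQuery_mem_QQ false) (uglyQuery_le_Q0L false) h
    · exact transfer _ (uglyQuery_mem_QQ true) (uglyQuery_le_Q0L true) h
  exact fun V D₁ D₂ h₁ h₂ hag => (key D₁ D₂ h₁ h₂ hag).antisymm (key D₂ D₁ h₂ h₁ (Agree.symm hag))

end HardDirection

section GridStructures

inductive GV : Type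
  | X : GV
  | Y : GV
  | pt (i j : ℕ) : GV

inductive GridLink (m : ℕ) : Bool → GV → GV → Prop
  | horiz {i j : ℕ} : i < m → j ≤ m → GridLink m false (.pt i j) (.pt (i + 1) j)
  | vert {i j : ℕ} : i ≤ m → j < m → GridLink m true (.pt i j) (.pt i (j + 1))

inductive GridDB (m : ℕ) (τ : Bool) (shade : Bool → ℕ → ℕ → ℕ) : GV → Sig → GV → Prop
  | start : GridDB m τ shade .X (startLetter τ) (.pt 0 0)
  | finish : GridDB m τ shade (.pt m m) .omega .Y
  | link {d : Bool} {i j : ℕ} {b : GV} :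
      GridLink m d (.pt i j) b → GridDB m τ shade (.pt i j) (.base (gridAB i j) d τ (shade d i j)) b

def ShadesIn (S : Finset ℕ) (m : ℕ) (shade : Bool → ℕ → ℕ → ℕ) : Prop :=
  ∀ ⦃d i j b⦄, GridLink m d (.pt i j) b → shade d i j ∈ S

variable {S : Finset ℕ} {m : ℕ} {τ : Bool} {shade : Bool → ℕ → ℕ → ℕ} {a b : GV}

theorem GridLink.corner {d : Bool} {i j : ℕ} {z : GV} (h₁ : GridLink m d (.pt i j) z)
    (h₂ : GridLink m (!d) z b) : i < m ∧ j < m ∧ b = .pt (i + 1) (j + 1) := by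
  cases h₁ <;> cases h₂ <;> exact ⟨by omega, by omega, rfl⟩

theorem gridDB_base_iff {ab d τ' : Bool} {σ : ℕ} :
    GridDB m τ shade a (.base ab d τ' σ) b ↔
      ∃ i j, a = .pt i j ∧ GridLink m d a b ∧ ab = gridAB i j ∧ τ' = τ ∧ σ = shade d i j := by
  constructor
  · cases τ <;> rintro (_ | _ | h) <;> exact ⟨_, _, rfl, h, rfl, rfl, rfl⟩
  · rintro ⟨i, j, rfl, h, rfl, rfl, rfl⟩
    exact .link h

theorem gridDB_omega_iff : GridDB m τ shade a .omega b ↔ a = .pt m m ∧ b = .Y := by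
  constructor
  · cases τ <;> rintro (_ | _ | _) <;> exact ⟨rfl, rfl⟩
  · rintro ⟨rfl, rfl⟩
    exact .finish

theorem gridDB_startLetter_iff {τ' : Bool} :
    GridDB m τ shade a (startLetter τ') b ↔ τ' = τ ∧ a = .X ∧ b = .pt 0 0 := by
  constructor
  · cases τ <;> cases τ' <;> rintro (_ | _ | _) <;> exact ⟨rfl, rfl, rfl⟩
  · rintro ⟨rfl, rfl, rfl⟩
    exact .start

theorem GridDB.labelsIn (hS : ShadesIn S m shade) : labelsIn (GridDB m τ shade) (SigAlph S) := by
  rintro _ _ _ (_ | _ | h)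
  · cases τ <;> simp [SigAlph, startLetter]
  · simp [SigAlph]
  · exact Or.inr (hS h)

theorem GridDB.not_startLetter : ¬ GridDB m τ shade a (startLetter (!τ)) b :=
  fun h => by simpa using (gridDB_startLetter_iff.1 h).1

theorem GridDB.not_base {ab d : Bool} {σ : ℕ} : ¬ GridDB m τ shade a (.base ab d (!τ) σ) b :=
  fun h => by obtain ⟨_, _, _, _, _, h, _⟩ := gridDB_base_iff.1 h; simp at h

theorem mem_qry_Qg2_gridDB : (a, b) ∈ qry Qg2 (GridDB m τ shade) ↔ a = .X ∧ b = .pt 0 0 := by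
  refine mem_qry_Qg2.trans ?_
  simp only [gridDB_startLetter_iff, exists_eq_left]

theorem mem_qry_letterQuery_gridDB (hS : ShadesIn S m shade) {ab d : Bool} :
    (a, b) ∈ qry (letterQuery S ab d) (GridDB m τ shade) ↔
      ∃ i j, a = .pt i j ∧ GridLink m d a b ∧ ab = gridAB i j := by
  refine mem_qry_letterQuery.trans ?_
  constructor
  · rintro ⟨_, _, _, e⟩
    obtain ⟨i, j, rfl, h, rfl, -⟩ := gridDB_base_iff.1 e
    exact ⟨i, j, rfl, h, rfl⟩
  · rintro ⟨i, j, rfl, h, rfl⟩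
    exact ⟨τ, _, hS h, .link h⟩

theorem exists_gridLink_corner (d : Bool) {i j : ℕ} (hi : i < m) (hj : j < m) :
    ∃ i' j', gridAB i' j' = !gridAB i j ∧ GridLink m d (.pt i j) (.pt i' j') ∧
      GridLink m (!d) (.pt i' j') (.pt (i + 1) (j + 1)) := by
  cases d
  · exact ⟨i + 1, j, by simp, .horiz hi hj.le, .vert (by omega) hj⟩
  · exact ⟨i, j + 1, by simp, .vert hi.le hj, .horiz hi (by omega)⟩

theorem mem_qry_cornerQuery_gridDB (hS : ShadesIn S m shade) {ab : Bool} :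
    (a, b) ∈ qry (cornerQuery S ab) (GridDB m τ shade) ↔
      ∃ i j, a = .pt i j ∧ ab = gridAB i j ∧ i < m ∧ j < m ∧ b = .pt (i + 1) (j + 1) := by
  refine mem_qry_cornerQuery.trans ?_
  constructor
  · rintro ⟨d, z, _, _, _, _, e₁, e₂⟩
    obtain ⟨i, j, rfl, h₁, rfl, -⟩ := gridDB_base_iff.1 e₁
    obtain ⟨_, _, rfl, h₂, -⟩ := gridDB_base_iff.1 e₂
    obtain ⟨hi, hj, rfl⟩ := h₁.corner h₂
    exact ⟨i, j, rfl, rfl, hi, hj, rfl⟩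
  · rintro ⟨i, j, rfl, rfl, hi, hj, rfl⟩
    obtain ⟨i', j', hab, h₁, h₂⟩ := exists_gridLink_corner (gridAB i j == τ) hi hj
    have hτ : (gridAB i j == (gridAB i j == τ)) = τ := by cases gridAB i j <;> cases τ <;> rfl
    exact ⟨_, _, _, hS h₁, _, hS h₂, gridDB_base_iff.2 ⟨i, j, rfl, h₁, rfl, hτ, rfl⟩,
      gridDB_base_iff.2 ⟨i', j', rfl, h₂, hab.symm, hτ, rfl⟩⟩

end GridStructures

section EasyDirection

variable {S : Finset ℕ} {F : Finset ((Bool × ℕ) × (Bool × ℕ))} {m : ℕ} {τ : Bool}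
  {shade : Bool → ℕ → ℕ → ℕ}

theorem Qgood_cases {L : Language Sig} (hL : L ∈ Qgood S) : L = Qg1 ∨ L = Qg2 ∨
    (∃ ab, L = cornerQuery S ab) ∨ ∃ ab d, L = letterQuery S ab d := by
  simp only [Qgood, Set.mem_insert_iff, Set.mem_singleton_iff] at hL
  rcases hL with rfl | rfl | rfl | rfl | rfl | rfl | rfl | rfl
  · exact Or.inl rfl
  · exact Or.inr (Or.inl rfl)
  · exact Or.inr (Or.inr (Or.inl ⟨false, (cornerQuery_eq false).symm⟩))
  · exact Or.inr (Or.inr (Or.inl ⟨true, (cornerQuery_eq true).symm⟩))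
  · exact Or.inr (Or.inr (Or.inr ⟨false, true, (letterQuery_eq false true).symm⟩))
  · exact Or.inr (Or.inr (Or.inr ⟨false, false, (letterQuery_eq false false).symm⟩))
  · exact Or.inr (Or.inr (Or.inr ⟨true, true, (letterQuery_eq true true).symm⟩))
  · exact Or.inr (Or.inr (Or.inr ⟨true, false, (letterQuery_eq true false).symm⟩))

theorem qry_gridDB_eq_of_mem_Qgood {L : Language Sig} (hL : L ∈ Qgood S) {τ' : Bool}
    {shade' : Bool → ℕ → ℕ → ℕ} (hs : ShadesIn S m shade) (hs' : ShadesIn S m shade') :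
    qry L (GridDB m τ shade) = qry L (GridDB m τ' shade') := by
  ext ⟨a, b⟩
  rcases Qgood_cases hL with rfl | rfl | ⟨ab, rfl⟩ | ⟨ab, d, rfl⟩
  · exact (mem_qry_Qg1.trans gridDB_omega_iff).trans (mem_qry_Qg1.trans gridDB_omega_iff).symm
  · exact mem_qry_Qg2_gridDB.trans mem_qry_Qg2_gridDB.symm
  · exact (mem_qry_cornerQuery_gridDB hs).trans (mem_qry_cornerQuery_gridDB hs').symm
  · exact (mem_qry_letterQuery_gridDB hs).trans (mem_qry_letterQuery_gridDB hs').symm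

theorem qry_uglyQuery_gridDB (τ' : Bool) : qry (uglyQuery S τ') (GridDB m τ shade) = ∅ := by
  refine qry_eq_empty_of_forall_mem fun w hw => ?_
  obtain ⟨u, ab, d, σ, u', rfl⟩ : ∃ u ab d σ u',
      w = startLetter τ' :: (u ++ .base ab d (!τ') σ :: (u' ++ [.omega])) := by
    cases τ' <;> obtain ⟨u, _, u', -, -, -, ⟨ab, d, σ, rfl⟩, rfl⟩ := hw <;>
      exact ⟨u, ab, d, σ, u', rfl⟩
  rcases Bool.eq_or_eq_not τ' τ with rfl | rfl
  · exact ⟨_, List.mem_cons_of_mem _ (List.mem_append_right _ List.mem_cons_self),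
      fun _ _ => GridDB.not_base⟩
  · exact ⟨_, List.mem_cons_self, fun _ _ => GridDB.not_startLetter⟩

theorem qry_gridDB_false_eq_empty_of_mem_Qbad {L : Language Sig} (hL : L ∈ Qbad S F) :
    qry L (GridDB m false shade) = ∅ := by
  refine qry_eq_empty_of_forall_mem fun w hw => ⟨.beta, ?_, fun _ _ => GridDB.not_startLetter⟩
  rcases hL with (rfl | rfl) | ⟨p, -, rfl⟩
  · obtain ⟨_, _, _, _, _, rfl⟩ := hw
    exact List.mem_cons_self
  · obtain ⟨_, _, _, _, _, rfl⟩ := hw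
    exact List.mem_cons_self
  · obtain ⟨_, _, _, _, _, _, rfl⟩ := hw
    exact List.mem_cons_self

theorem qry_Qstart_gridDB_true : qry (Qstart S) (GridDB m true shade) = ∅ :=
  qry_eq_empty_of_forall_mem fun _ ⟨_, _, _, hw⟩ =>
    ⟨.alpha, by simp [hw], fun _ _ => GridDB.not_startLetter⟩

variable {hl vl : ℕ → ℕ → ℕ}

theorem qry_Qbad1_gridDB (h00 : vl 0 0 = 0) :
    qry (Qbad1 S) (GridDB m true fun d => cond d vl hl) = ∅ := by
  refine Set.eq_empty_of_forall_notMem fun _ ⟨_, ⟨σ, u, _, hσ0, _, rfl⟩, z, e₀, z', e₁, _⟩ => hσ0 ?_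
  obtain ⟨-, -, rfl⟩ := (gridDB_startLetter_iff (τ' := true)).1 e₀
  obtain ⟨_, _, h, -, -, -, rfl⟩ := gridDB_base_iff.1 e₁
  cases h
  exact h00

theorem qry_Qbad2_gridDB (hM0 : hl (m - 1) m = 0) :
    qry (Qbad2 S) (GridDB m true fun d => cond d vl hl) = ∅ := by
  refine Set.eq_empty_of_forall_notMem fun _ ⟨_, ⟨σ, u, _, hσ0, _, rfl⟩, _, _, hp⟩ => hσ0 ?_
  obtain ⟨_, -, _, e₁, _, e₂, -⟩ := (pathSat_append u).1 hp
  obtain ⟨rfl, -⟩ := gridDB_omega_iff.1 e₂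
  obtain ⟨i, j, rfl, h, -, -, rfl⟩ := gridDB_base_iff.1 e₁
  generalize hb : GV.pt m m = b at h
  cases h
  cases hb
  simpa using hM0

theorem qry_QbadF_gridDB
    (nHH : ∀ i j, i + 1 < m → j ≤ m → ((false, hl i j), (false, hl (i + 1) j)) ∉ F)
    (nHV : ∀ i j, i < m → j < m → ((false, hl i j), (true, vl (i + 1) j)) ∉ F)
    (nVH : ∀ i j, i < m → j < m → ((true, vl i j), (false, hl i (j + 1))) ∉ F)
    (nVV : ∀ i j, i ≤ m → j + 1 < m → ((true, vl i j), (true, vl i (j + 1))) ∉ F)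
    {p : (Bool × ℕ) × (Bool × ℕ)} (hp : p ∈ F) :
    qry (QbadF S p.1.1 p.1.2 p.2.1 p.2.2) (GridDB m true fun d => cond d vl hl) = ∅ := by
  refine Set.eq_empty_of_forall_notMem fun _ ⟨_, ⟨u, u', _, _, _, _, rfl⟩, _, _, hpath⟩ => ?_
  obtain ⟨_, -, _, e₁, _, e₂, -⟩ := (pathSat_append u).1 hpath
  obtain ⟨i, j, rfl, h₁, -, -, hs⟩ := gridDB_base_iff.1 e₁
  obtain ⟨_, _, rfl, h₂, -, -, hs'⟩ := gridDB_base_iff.1 e₂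
  obtain ⟨⟨d, s⟩, d', s'⟩ := p
  cases h₁ <;> cases h₂ <;> dsimp only at hs hs' <;> subst hs hs'
  exacts [nHH i j (by omega) (by omega) hp, nHV i j (by omega) (by omega) hp,
    nVH i j (by omega) (by omega) hp, nVV i j (by omega) (by omega) hp]

variable {shade' : Bool → ℕ → ℕ → ℕ}

theorem agree_gridDB (hs : ShadesIn S m shade) (hs' : ShadesIn S m shade')
    (hbad : ∀ L ∈ Qbad S F, qry L (GridDB m true shade) = ∅) :
    Agree S F (GridDB m true shade) (GridDB m false shade') := by
  rintro L ((hL | hL) | (rfl | rfl))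
  · exact qry_gridDB_eq_of_mem_Qgood hL hs hs'
  · rw [hbad L hL, qry_gridDB_false_eq_empty_of_mem_Qbad hL]
  · exact (qry_uglyQuery_gridDB false).trans (qry_uglyQuery_gridDB false).symm
  · exact (qry_uglyQuery_gridDB true).trans (qry_uglyQuery_gridDB true).symm

theorem qry_Q0L_gridDB_true (hbad : ∀ L ∈ Qbad S F, qry L (GridDB m true shade) = ∅) :
    qry (Q0L S F) (GridDB m true shade) = ∅ := by
  refine Set.eq_empty_of_forall_notMem fun _ ⟨w, hw, hp⟩ => ?_
  have absent : ∀ L, qry L (GridDB m true shade) = ∅ → w ∉ L :=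
    fun L hL hwL => Set.eq_empty_iff_forall_notMem.1 hL _ ⟨w, hwL, hp⟩
  rcases mem_Q0L.1 hw with h | h | h | ⟨p, hp, h⟩ | h | h
  · exact absent _ qry_Qstart_gridDB_true h
  · exact absent _ (hbad _ (by simp [Qbad])) h
  · exact absent _ (hbad _ (by simp [Qbad])) h
  · exact absent _ (hbad _ (Or.inr ⟨p, hp, rfl⟩)) h
  · exact absent _ (qry_uglyQuery_gridDB false) h
  · exact absent _ (qry_uglyQuery_gridDB true) h

theorem mem_qry_Q0L_gridDB_false (hS : 0 ∈ S) (hm : 1 ≤ m) :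
    (GV.X, GV.Y) ∈ qry (Q0L S F) (GridDB m false fun _ _ _ => 0) := by
  refine qry_mono Qstart_le_Q0L (mem_qry_Qstart_iff_tempStair.2
    ⟨m, hm, fun i => .pt i i, fun i => .pt (i + 1) i, .start, fun i hi => ?_, .finish⟩)
  exact ⟨⟨0, hS, gridDB_base_iff.2 ⟨i, i, rfl, .horiz hi hi.le, by simp, rfl, rfl⟩⟩,
    0, hS, gridDB_base_iff.2 ⟨i + 1, i, rfl, .vert hi hi, by simp, rfl, rfl⟩⟩

end EasyDirection

theorem not_determinesOn_of_gridSol {S : Finset ℕ} {F : Finset ((Bool × ℕ) × (Bool × ℕ))}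
    (hS : 0 ∈ S) (h : GridSol S F) : ¬ DeterminesOn (SigAlph S) (QQ S F) (Q0L S F) := by
  obtain ⟨m, hm, hl, vl, hlS, vlS, h00, hM0, nHH, nHV, nVH, nVV⟩ := h
  have hwarm : ShadesIn S m fun d => cond d vl hl := by
    rintro _ i j _ (⟨hi, hj⟩ | ⟨hi, hj⟩)
    exacts [hlS i j hi hj, vlS i j hi hj]
  have hcold : ShadesIn S m fun _ _ _ => 0 := fun _ _ _ _ _ => hS
  have hbad : ∀ L ∈ Qbad S F, qry L (GridDB m true fun d => cond d vl hl) = ∅ := by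
    rintro L ((rfl | rfl) | ⟨p, hp, rfl⟩)
    exacts [qry_Qbad1_gridDB h00, qry_Qbad2_gridDB hM0, qry_QbadF_gridDB nHH nHV nVH nVV hp]
  intro hdet
  have hXY := mem_qry_Q0L_gridDB_false (F := F) hS hm
  rw [← hdet GV _ _ (GridDB.labelsIn hwarm) (GridDB.labelsIn hcold) (agree_gridDB hwarm hcold hbad),
    qry_Q0L_gridDB_true hbad] at hXY
  exact hXY

theorem reduction_correct_general (S : Finset ℕ) (F : Finset ((Bool × ℕ) × (Bool × ℕ)))
    (hS : 0 ∈ S) :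
    (¬ GridSol S F) ↔ DeterminesOn (SigAlph S) (QQ S F) (Q0L S F) :=
  ⟨determinesOn_of_not_gridSol, fun hdet hsol => not_determinesOn_of_gridSol hS hsol hdet⟩

/-- Correctness of the reduction: the OGTP instance `⟨𝒮, ℱ⟩` has no
solution iff `𝒬` determines `Q₀`. -/
theorem reduction_correct (S : Finset ℕ) (F : Finset ((Bool × ℕ) × (Bool × ℕ)))
    (hS : 0 ∈ S) (hF : FWf S F) :
    (¬ GridSol S F) ↔ DeterminesOn (SigAlph S) (QQ S F) (Q0L S F) :=
  reduction_correct_general S F hS
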